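/- Let 0 < r < 1 and let a, b ∈ ℝ³ be unit vectors with -1 < ⟨a,b⟩ < 1 and 1 + ⟨a,b⟩ - 2r² ≥ 0. Then Φ_r(a,b) + Φ_r(b,a) = -(2r/(1+⟨a,b⟩))·(a+b), and ⟨Φ_r(a,b) - Φ_r(b,a), a - b⟩ = 0. (Hence the dual edge XY is orthogonal to the edge AB, and the midpoint of XY lies on the line through the origin and the midpoint of AB.) -/
import Mathlib

open scoped RealInnerProductSpace

/-- The cross product on `ℝ³` (as `EuclideanSpace ℝ (Fin 3)`). -/
noncomputable def cross3 (a b : EuclideanSpace ℝ (Fin 3)) : EuclideanSpace ℝ (Fin 3) :=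
  (WithLp.equiv 2 (Fin 3 → ℝ)).symm
    ![a 1 * b 2 - a 2 * b 1, a 2 * b 0 - a 0 * b 2, a 0 * b 1 - a 1 * b 0]

/-- The dual-edge map of the paper:
`Φ_r(a,b) = (1/(1+⟪a,b⟫))·(√((1+⟪a,b⟫-2r²)/(1-⟪a,b⟫))·(a × b) - r·(a+b))`. -/
noncomputable def Phi (r : ℝ) (a b : EuclideanSpace ℝ (Fin 3)) : EuclideanSpace ℝ (Fin 3) :=
  (1 / (1 + ⟪a, b⟫)) •
    (Real.sqrt ((1 + ⟪a, b⟫ - 2 * r ^ 2) / (1 - ⟪a, b⟫)) • cross3 a b - r • (a + b))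

lemma cross3_swap (a b : EuclideanSpace ℝ (Fin 3)) : cross3 b a = -cross3 a b := by
  ext i
  fin_cases i <;> simp [cross3] <;> ring

lemma inner_cross3_left (a b : EuclideanSpace ℝ (Fin 3)) : ⟪cross3 a b, a⟫ = 0 := by
  simp [cross3, PiLp.inner_apply, Fin.sum_univ_three]
  ring

lemma inner_cross3_right (a b : EuclideanSpace ℝ (Fin 3)) : ⟪cross3 a b, b⟫ = 0 := by
  simp [cross3, PiLp.inner_apply, Fin.sum_univ_three]
  ring

/-- The dual edge `XY` is orthogonal to the edge `AB`, and the midpoint of `XY` lies on the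
line through the origin and the midpoint of `AB`:
`Φ_r(a,b) + Φ_r(b,a) = -(2r/(1+⟪a,b⟫))·(a+b)` and `⟪Φ_r(a,b) - Φ_r(b,a), a - b⟫ = 0`. -/
theorem stmt_16 (r : ℝ) (hr0 : 0 < r) (hr1 : r < 1)
    (a b : EuclideanSpace ℝ (Fin 3)) (ha : ‖a‖ = 1) (hb : ‖b‖ = 1)
    (h₁ : -1 < ⟪a, b⟫) (h₂ : ⟪a, b⟫ < 1) (h₃ : 0 ≤ 1 + ⟪a, b⟫ - 2 * r ^ 2) :
    Phi r a b + Phi r b a = (-(2 * r / (1 + ⟪a, b⟫))) • (a + b) ∧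
      ⟪Phi r a b - Phi r b a, a - b⟫ = 0 := by
  have hba : ⟪b, a⟫ = ⟪a, b⟫ := (real_inner_comm b a).symm
  set s := Real.sqrt ((1 + ⟪a, b⟫ - 2 * r ^ 2) / (1 - ⟪a, b⟫)) with hs
  have hPab : Phi r a b = (1 / (1 + ⟪a, b⟫)) • (s • cross3 a b - r • (a + b)) := rfl
  have hPba : Phi r b a = (1 / (1 + ⟪a, b⟫)) • ((-s) • cross3 a b - r • (a + b)) := by
    rw [Phi, hba, cross3_swap, ← hs]
    congr 1
    rw [add_comm b a]
    module
  constructor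
  · rw [hPab, hPba]
    module
  · rw [hPab, hPba, ← smul_sub]
    have : (s • cross3 a b - r • (a + b)) - ((-s) • cross3 a b - r • (a + b))
        = (2 * s) • cross3 a b := by module
    rw [this, inner_smul_left, inner_smul_left, inner_sub_right,
      inner_cross3_left, inner_cross3_right]
    ring
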